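/- Let N be a positive integer and let ν be a partition of N. Call a partition μ of N orthogonal if every even part of μ occurs with even multiplicity. Then the set { μ : μ is an orthogonal partition of N and μ ≤ ν in the dominance order } is nonempty and has a unique maximal element (the orthogonal collapse of ν). -/

import Mathlib

/-- A partition of `N`: a weakly decreasing list of positive integers summing to `N`. -/
def IsPartitionOf (N : ℕ) (p : List ℕ) : Prop :=
  p.Pairwise (· ≥ ·) ∧ (∀ x ∈ p, 0 < x) ∧ p.sum = N

/-- An orthogonal partition of `N`: a partition in which every even part occurs with even
multiplicity. -/
def IsOrthPartitionOf (N : ℕ) (p : List ℕ) : Prop :=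
  IsPartitionOf N p ∧ ∀ k : ℕ, Even k → Even (p.count k)

/-- The dominance order on partitions: comparison of all prefix sums. -/
def DomLE (p q : List ℕ) : Prop :=
  ∀ j : ℕ, (p.take j).sum ≤ (q.take j).sum

/-!
If `ν` is not orthogonal, let `q` be its largest even part of odd multiplicity and move one box
from the last row of length `q` to the first row shorter than `q - 1`. The result `ν'` is a
partition with `ν' < ν`, whose prefix sums drop by one exactly at the cuts `t` that follow the
last `q` and precede the first part below `q - 1`. An orthogonal `μ ≤ ν` cannot attain the
prefix sum of `ν` at such a cut: equality would force `μ` to split there, like `ν`, into parts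
`≥ q - 1` followed by parts `< q`, so both prefixes would contain every even part `≥ q` with its
full multiplicity, an even number of them for `μ` and an odd number for `ν`; as the sum of a list
has the parity of its length plus its number of even entries, the two prefix sums would differ.
So every orthogonal `μ ≤ ν` satisfies `μ ≤ ν'`, and iterating the move yields the greatest
orthogonal partition below `ν`.
-/

namespace List

theorem sum_take_eq_sum_range_getD (l : List ℕ) (t : ℕ) :
    (l.take t).sum = ∑ k ∈ Finset.range t, l.getD k 0 := by
  induction l generalizing t with
  | nil => simp
  | cons a l ih =>
    cases t with
    | zero => simp
    | succ t => rw [Finset.sum_range_succ', take_succ_cons, sum_cons, ih]; simp [add_comm]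

theorem sum_take_succ_eq_add_getD (l : List ℕ) (t : ℕ) :
    (l.take (t + 1)).sum = (l.take t).sum + l.getD t 0 := by
  simp only [sum_take_eq_sum_range_getD, Finset.sum_range_succ]

theorem pairwise_ge_iff_antitone_getD {l : List ℕ} :
    l.Pairwise (· ≥ ·) ↔ Antitone (l.getD · 0) := by
  constructor
  · intro hl i j hij
    dsimp only
    by_cases hj : j < l.length
    · rw [getD_eq_getElem _ _ hj, getD_eq_getElem _ _ (hij.trans_lt hj)]
      rcases hij.lt_or_eq with hij | rfl
      · exact pairwise_iff_getElem.mp hl i j _ hj hij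
      · rfl
    · rw [getD_eq_default _ _ (not_lt.mp hj)]
      exact Nat.zero_le _
  · refine fun hl => pairwise_iff_getElem.mpr fun i j hi hj hij => ?_
    have := hl hij.le
    dsimp only at this
    rwa [getD_eq_getElem _ _ hi, getD_eq_getElem _ _ hj] at this

theorem exists_getD_eq_of_mem_take {l : List ℕ} {n x : ℕ} (hx : x ∈ l.take n) :
    ∃ k < n, l.getD k 0 = x := by
  obtain ⟨k, hk, rfl⟩ := mem_iff_getElem.mp hx
  rw [length_take] at hk
  exact ⟨k, by omega, by rw [getElem_take, getD_eq_getElem]⟩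

theorem exists_getD_eq_of_mem_drop {l : List ℕ} {n x : ℕ} (hx : x ∈ l.drop n) :
    ∃ k ≥ n, l.getD k 0 = x := by
  obtain ⟨k, hk, rfl⟩ := mem_iff_getElem.mp hx
  rw [length_drop] at hk
  exact ⟨n + k, by omega, by rw [getElem_drop, getD_eq_getElem]⟩

theorem eq_of_getD_eq {l l' : List ℕ} (hl : ∀ x ∈ l, 0 < x) (hl' : ∀ x ∈ l', 0 < x)
    (h : ∀ k, l.getD k 0 = l'.getD k 0) : l = l' := by
  have hlen : ∀ {l l' : List ℕ}, (∀ x ∈ l', 0 < x) → (∀ k, l.getD k 0 = l'.getD k 0) →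
      l'.length ≤ l.length := by
    intro l l' hl' h
    by_contra! hlt
    have := h l.length
    rw [getD_eq_default _ _ le_rfl, getD_eq_getElem _ _ hlt] at this
    exact (hl' _ (getElem_mem hlt)).ne this
  refine ext_getElem (le_antisymm (hlen hl (fun k => (h k).symm)) (hlen hl' h)) fun k hk hk' => ?_
  have := h k
  rwa [getD_eq_getElem _ _ hk, getD_eq_getElem _ _ hk'] at this

theorem sum_modEq_length_add_countP_even (l : List ℕ) :
    l.sum ≡ l.length + l.countP (fun a => Even a) [MOD 2] := by
  induction l with
  | nil => rfl
  | cons a l ih =>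
    unfold Nat.ModEq at *
    rcases Nat.even_or_odd a with ha | ha
    · simp only [sum_cons, length_cons, countP_cons, ha, decide_true, if_true]
      have := Nat.even_iff.mp ha
      omega
    · simp only [sum_cons, length_cons, countP_cons, Nat.not_even_iff_odd.mpr ha, decide_false,
        Bool.false_eq_true, if_false]
      have := Nat.odd_iff.mp ha
      omega

theorem even_countP_of_forall_even_count {p : ℕ → Prop} [DecidablePred p] {l : List ℕ}
    (h : ∀ a, p a → Even (l.count a)) : Even (l.countP (fun a => p a)) := by
  rw [← Finset.sum_filter_count_eq_countP]
  exact Finset.even_sum _ fun a ha => h a (Finset.mem_filter.mp ha).2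

end List

theorem Antitone.exists_le_iff_lt {f : ℕ → ℕ} (hf : Antitone f) {c : ℕ} (h : ∃ n, f n < c) :
    ∃ a, ∀ k, c ≤ f k ↔ k < a := by
  classical
  refine ⟨Nat.find h, fun k => ⟨fun hk => ?_, fun hk => not_lt.mp (Nat.find_min h hk)⟩⟩
  by_contra! hak
  exact absurd hk (not_le.mpr ((hf hak).trans_lt (Nat.find_spec h)))

theorem DomLE.antisymm {p q : List ℕ} (hp : ∀ x ∈ p, 0 < x) (hq : ∀ x ∈ q, 0 < x)
    (hpq : DomLE p q) (hqp : DomLE q p) : p = q :=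
  List.eq_of_getD_eq hp hq fun k => by
    have h₁ := hpq (k + 1)
    have h₂ := hqp (k + 1)
    have h₀ := le_antisymm (hpq k) (hqp k)
    rw [List.sum_take_succ_eq_add_getD, List.sum_take_succ_eq_add_getD] at h₁ h₂
    omega

namespace OrthogonalCollapse

open List

/-- Moves one box of the Young diagram of `l` from row `i` to row `j`; as `getD` pads `l` with
zeros, `j = l.length` starts a new row. -/
def moveBox (l : List ℕ) (i j : ℕ) : List ℕ :=
  (range (max l.length (j + 1))).map fun k =>
    l.getD k 0 - (if k = i then 1 else 0) + (if k = j then 1 else 0)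

theorem getD_moveBox (l : List ℕ) (i j k : ℕ) :
    (moveBox l i j).getD k 0 =
      l.getD k 0 - (if k = i then 1 else 0) + (if k = j then 1 else 0) := by
  rw [moveBox, getD_eq_getElem?_getD]
  by_cases hk : k < max l.length (j + 1)
  · simp [getElem?_range hk]
  · rw [getElem?_eq_none (by simpa using hk), getD_eq_default _ _ (by omega)]
    simp only [Option.getD_none]
    split_ifs <;> omega

theorem sum_take_moveBox_add (l : List ℕ) (i j t : ℕ) (hi : 0 < l.getD i 0) :
    ((moveBox l i j).take t).sum + (if i < t then 1 else 0) =
      (l.take t).sum + (if j < t then 1 else 0) := by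
  have hind : ∀ c, (if c < t then 1 else 0) = ∑ k ∈ Finset.range t, if k = c then 1 else 0 :=
    fun c => by simp [Finset.sum_ite_eq']
  simp only [sum_take_eq_sum_range_getD, getD_moveBox, hind i, hind j, ← Finset.sum_add_distrib]
  refine Finset.sum_congr rfl fun k _ => ?_
  split_ifs <;> subst_vars <;> omega

theorem sum_moveBox (l : List ℕ) (i j : ℕ) (hi : 0 < l.getD i 0) :
    (moveBox l i j).sum = l.sum := by
  have hil : i < l.length := by
    by_contra! h
    rw [getD_eq_default _ _ h] at hi
    exact hi.false
  have := sum_take_moveBox_add l i j (max l.length (j + 1)) hi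
  rw [take_of_length_le (by simp [moveBox]), take_of_length_le (by omega)] at this
  simp only [show i < max l.length (j + 1) by omega, show j < max l.length (j + 1) by omega,
    if_true] at this
  omega

theorem pairwise_moveBox {l : List ℕ} (hl : l.Pairwise (· ≥ ·)) {i j q : ℕ}
    (hi : l.getD i 0 = q) (hmid : ∀ k, i < k → k < j → l.getD k 0 = q - 1)
    (hj : l.getD j 0 < q - 1) :
    (moveBox l i j).Pairwise (· ≥ ·) := by
  have hf := pairwise_ge_iff_antitone_getD.mp hl
  have hij : i < j := by
    by_contra! h
    have : l.getD i 0 ≤ l.getD j 0 := hf h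
    omega
  refine pairwise_ge_iff_antitone_getD.mpr (antitone_nat_of_succ_le fun n => ?_)
  simp only [getD_moveBox]
  have hstep : l.getD (n + 1) 0 ≤ l.getD n 0 := hf n.le_succ
  have hbefore : n ≤ i → q ≤ l.getD n 0 := fun h => hi ▸ hf h
  have hn := hmid n
  have hn' := hmid (n + 1)
  split_ifs <;> subst_vars <;> omega

theorem pos_of_mem_moveBox {l : List ℕ} (hl : ∀ x ∈ l, 0 < x) {i j : ℕ} (hi : 2 ≤ l.getD i 0)
    (hj : j ≤ l.length) : ∀ x ∈ moveBox l i j, 0 < x := by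
  intro x hx
  obtain ⟨k, hk, rfl⟩ := mem_map.mp hx
  rw [mem_range] at hk
  by_cases hkl : k < l.length
  · have := hl _ (getElem_mem hkl)
    rw [← getD_eq_getElem _ 0 hkl] at this
    split_ifs <;> subst_vars <;> omega
  · simp [show k = j by omega]

theorem exists_max_even_odd_count {l : List ℕ} (h : ¬ ∀ k, Even k → Even (l.count k)) :
    ∃ q, Even q ∧ Odd (l.count q) ∧ ∀ a, Even a → q < a → Even (l.count a) := by
  set S := l.toFinset.filter fun a => Even a ∧ Odd (l.count a)
  have hmem : ∀ a, a ∈ S ↔ Even a ∧ Odd (l.count a) := fun a => by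
    simpa [S] using fun _ hodd => count_pos_iff.mp hodd.pos
  have hS : S.Nonempty := by
    push Not at h
    obtain ⟨k, hk, hodd⟩ := h
    exact ⟨k, (hmem k).mpr ⟨hk, Nat.not_even_iff_odd.mp hodd⟩⟩
  obtain ⟨q, hq, hmax⟩ := S.exists_max_image id hS
  refine ⟨q, ((hmem q).mp hq).1, ((hmem q).mp hq).2, fun a ha hqa => ?_⟩
  by_contra hodd
  exact (hmax a ((hmem a).mpr ⟨ha, Nat.not_even_iff_odd.mp hodd⟩)).not_gt hqa

theorem sum_take_modEq_of_cut {l : List ℕ} (hl : l.Pairwise (· ≥ ·)) {q s : ℕ} (hq : Even q)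
    (hs : q - 1 ≤ l.getD s 0) (hs' : l.getD (s + 1) 0 < q) :
    (l.take (s + 1)).sum ≡ s + 1 + l.countP (fun a => Even a ∧ q ≤ a) [MOD 2] := by
  have hf := pairwise_ge_iff_antitone_getD.mp hl
  have hq2 : 2 ≤ q := by obtain ⟨r, rfl⟩ := hq; omega
  have hlen : (l.take (s + 1)).length = s + 1 := by
    have : s < l.length := by
      by_contra! h
      rw [getD_eq_default _ _ h] at hs
      omega
    rw [length_take]
    omega
  have hcount : (l.take (s + 1)).countP (fun a => Even a) =
      l.countP (fun a => Even a ∧ q ≤ a) := by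
    conv_rhs => rw [← take_append_drop (s + 1) l]
    rw [countP_append, (countP_eq_zero (l := l.drop (s + 1))).mpr ?_, add_zero]
    · refine countP_congr fun x hx => ?_
      obtain ⟨k, hk, rfl⟩ := exists_getD_eq_of_mem_take hx
      have : l.getD s 0 ≤ l.getD k 0 := hf (show k ≤ s by omega)
      simp only [decide_eq_true_eq, iff_self_and]
      rintro ⟨r, hr⟩
      obtain ⟨r', rfl⟩ := hq
      omega
    · intro x hx
      obtain ⟨k, hk, rfl⟩ := exists_getD_eq_of_mem_drop hx
      have : l.getD k 0 ≤ l.getD (s + 1) 0 := hf hk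
      simp only [decide_eq_true_eq, not_and, not_le]
      intro _
      omega
  have := sum_modEq_length_add_countP_even (l.take (s + 1))
  rwa [hlen, hcount] at this

theorem sum_take_lt_of_isOrth {μ ν : List ℕ} (hμ : μ.Pairwise (· ≥ ·))
    (hμo : ∀ k, Even k → Even (μ.count k)) (hν : ν.Pairwise (· ≥ ·)) (hle : DomLE μ ν)
    {q s : ℕ} (hq : Even q) (hcq : Odd (ν.count q)) (hmax : ∀ a, Even a → q < a → Even (ν.count a))
    (hs : q - 1 ≤ ν.getD s 0) (hs' : ν.getD (s + 1) 0 < q) :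
    (μ.take (s + 1)).sum < (ν.take (s + 1)).sum := by
  by_contra! hge
  have heq := le_antisymm (hle _) hge
  have hbefore := hle s
  have hafter := hle (s + 1 + 1)
  have hμ₁ := sum_take_succ_eq_add_getD μ s
  have hν₁ := sum_take_succ_eq_add_getD ν s
  have hμ₂ := sum_take_succ_eq_add_getD μ (s + 1)
  have hν₂ := sum_take_succ_eq_add_getD ν (s + 1)
  have hμs : q - 1 ≤ μ.getD s 0 := by omega
  have hμs' : μ.getD (s + 1) 0 < q := by omega
  have hμmod := sum_take_modEq_of_cut hμ hq hμs hμs'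
  have hνmod := sum_take_modEq_of_cut hν hq hs hs'
  have hμeven : Even (μ.countP fun a => Even a ∧ q ≤ a) :=
    even_countP_of_forall_even_count fun a ha => hμo a ha.1
  have hνodd : Odd (ν.countP fun a => Even a ∧ q ≤ a) := by
    have hq' : q ∈ ν.toFinset.filter fun a => Even a ∧ q ≤ a := by
      simpa [hq] using count_pos_iff.mp hcq.pos
    rw [← Finset.sum_filter_count_eq_countP, ← Finset.add_sum_erase _ _ hq']
    refine hcq.add_even (Finset.even_sum _ fun a ha => ?_)
    simp only [Finset.mem_erase, Finset.mem_filter] at ha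
    exact hmax a ha.2.2.1 (lt_of_le_of_ne ha.2.2.2 (Ne.symm ha.1))
  unfold Nat.ModEq at hμmod hνmod
  rw [Nat.even_iff] at hμeven
  rw [Nat.odd_iff] at hνodd
  omega

theorem exists_dominated_of_not_isOrth {N : ℕ} {ν : List ℕ} (hν : IsPartitionOf N ν)
    (hbad : ¬ ∀ k, Even k → Even (ν.count k)) :
    ∃ ν', IsPartitionOf N ν' ∧ DomLE ν' ν ∧ ν' ≠ ν ∧
      ∀ μ, IsOrthPartitionOf N μ → DomLE μ ν → DomLE μ ν' := by
  obtain ⟨hsort, hpos, hsum⟩ := hν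
  obtain ⟨q, hqe, hcq, hmax⟩ := exists_max_even_odd_count hbad
  have hf := pairwise_ge_iff_antitone_getD.mp hsort
  obtain ⟨p, hp, hpq⟩ := getElem_of_mem (count_pos_iff.mp hcq.pos)
  have hq2 : 2 ≤ q := by
    have := hpos _ (getElem_mem hp)
    obtain ⟨r, rfl⟩ := hqe
    omega
  rw [← getD_eq_getElem _ 0 hp] at hpq
  have hend : ν.getD ν.length 0 = 0 := getD_eq_default _ _ le_rfl
  -- the last part equal to `q` has index `a - 1`, the first part below `q - 1` has index `b`
  obtain ⟨a, ha⟩ := hf.exists_le_iff_lt (c := q) ⟨ν.length, by omega⟩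
  obtain ⟨b, hb⟩ := hf.exists_le_iff_lt (c := q - 1) ⟨ν.length, by omega⟩
  have hpa : p < a := (ha p).mp hpq.ge
  have hi : ν.getD (a - 1) 0 = q := le_antisymm (hpq ▸ hf (by omega)) ((ha _).mpr (by omega))
  have hab : a - 1 < b := (hb _).mp (by omega)
  have hbl : b ≤ ν.length := by
    by_contra! h
    have := (hb _).mpr h
    omega
  have hmid : ∀ k, a - 1 < k → k < b → ν.getD k 0 = q - 1 := fun k h₁ h₂ => by
    have := (ha k).not.mpr (by omega)
    have := (hb k).mpr h₂
    omega
  have hj : ν.getD b 0 < q - 1 := not_le.mp ((hb b).not.mpr (lt_irrefl b))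
  have hshift := fun t => sum_take_moveBox_add ν (a - 1) b t (by omega)
  refine ⟨moveBox ν (a - 1) b, ⟨pairwise_moveBox hsort hi hmid hj,
    pos_of_mem_moveBox hpos (by omega) hbl, (sum_moveBox ν (a - 1) b (by omega)).trans hsum⟩,
    fun t => ?_, fun h => ?_, fun μ hμ hμν t => ?_⟩
  · have := hshift t
    split_ifs at this <;> omega
  · have := hshift a
    rw [h, if_pos (by omega), if_neg (by omega)] at this
    omega
  · have := hshift t
    by_cases hwin : a - 1 < t ∧ t ≤ b
    · obtain ⟨s, rfl⟩ : ∃ s, t = s + 1 := ⟨t - 1, by omega⟩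
      have := sum_take_lt_of_isOrth hμ.1.1 hμ.2 hsort hμν hqe hcq hmax ((hb s).mpr (by omega))
        (not_le.mp ((ha _).not.mpr (by omega)))
      split_ifs at * <;> omega
    · have := hμν t
      split_ifs at * <;> omega

theorem sum_range_sum_take_lt {N : ℕ} {μ ν : List ℕ} (hμ : IsPartitionOf N μ)
    (hν : IsPartitionOf N ν) (hle : DomLE μ ν) (hne : μ ≠ ν) :
    ∑ t ∈ Finset.range (N + 1), (μ.take t).sum < ∑ t ∈ Finset.range (N + 1), (ν.take t).sum := by
  refine Finset.sum_lt_sum (fun t _ => hle t) ?_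
  by_contra! h
  refine hne (DomLE.antisymm hμ.2.1 hν.2.1 hle fun t => ?_)
  by_cases ht : t ≤ N
  · exact h t (Finset.mem_range.mpr (by omega))
  · have htake : ∀ {l}, IsPartitionOf N l → l.take t = l := fun hl =>
      take_of_length_le ((length_le_sum_of_one_le _ hl.2.1).trans (by rw [hl.2.2]; omega))
    rw [htake hμ, htake hν, hμ.2.2, hν.2.2]

theorem exists_greatest_isOrth_domLE {N : ℕ} {ν : List ℕ} (hν : IsPartitionOf N ν) :
    ∃ μ₀, IsOrthPartitionOf N μ₀ ∧ DomLE μ₀ ν ∧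
      ∀ μ, IsOrthPartitionOf N μ → DomLE μ ν → DomLE μ μ₀ := by
  induction hm : ∑ t ∈ Finset.range (N + 1), (ν.take t).sum using Nat.strong_induction_on
    generalizing ν with
  | _ m ih =>
  by_cases horth : ∀ k, Even k → Even (ν.count k)
  · exact ⟨ν, ⟨hν, horth⟩, fun _ => le_rfl, fun _ _ h => h⟩
  obtain ⟨ν', hν', hle, hne, hdom⟩ := exists_dominated_of_not_isOrth hν horth
  obtain ⟨μ₀, hμ₀, h₀, hgreatest⟩ := ih _ (hm ▸ sum_range_sum_take_lt hν' hν hle hne) hν' rfl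
  exact ⟨μ₀, hμ₀, fun t => (h₀ t).trans (hle t), fun μ hμ h => hgreatest μ hμ (hdom μ hμ h)⟩

end OrthogonalCollapse

theorem orthogonal_collapse_general (N : ℕ) (ν : List ℕ) (hν : IsPartitionOf N ν) :
    (∃ μ : List ℕ, IsOrthPartitionOf N μ ∧ DomLE μ ν) ∧
    (∃! μ₀ : List ℕ, (IsOrthPartitionOf N μ₀ ∧ DomLE μ₀ ν) ∧
      ∀ μ : List ℕ, IsOrthPartitionOf N μ → DomLE μ ν → DomLE μ₀ μ → μ = μ₀) := by
  obtain ⟨μ₀, hμ₀, h₀ν, hgreatest⟩ := OrthogonalCollapse.exists_greatest_isOrth_domLE hν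
  refine ⟨⟨μ₀, hμ₀, h₀ν⟩, μ₀, ⟨⟨hμ₀, h₀ν⟩, fun μ hμ hμν h₀μ =>
    DomLE.antisymm hμ.1.2.1 hμ₀.1.2.1 (hgreatest μ hμ hμν) h₀μ⟩, ?_⟩
  rintro μ₁ ⟨⟨hμ₁, h₁ν⟩, hmax₁⟩
  exact (hmax₁ μ₀ hμ₀ h₀ν (hgreatest μ₁ hμ₁ h₁ν)).symm

/-- Orthogonal collapse: the set of orthogonal partitions of `N` dominated by a given
partition `ν` of `N` is nonempty and has a unique maximal element. -/
theorem orthogonal_collapse (N : ℕ) (hN : 0 < N) (ν : List ℕ) (hν : IsPartitionOf N ν) :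
    (∃ μ : List ℕ, IsOrthPartitionOf N μ ∧ DomLE μ ν) ∧
    (∃! μ₀ : List ℕ, (IsOrthPartitionOf N μ₀ ∧ DomLE μ₀ ν) ∧
      ∀ μ : List ℕ, IsOrthPartitionOf N μ → DomLE μ ν → DomLE μ₀ μ → μ = μ₀) :=
  orthogonal_collapse_general N ν hν
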